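/- arXiv:1702.01476 — 3 statements merged into one kernel-verified Lean document; each statement's English description precedes it below -/
import Mathlib

section
/- Let n ≥ 1 and let J be the 2n×2n real block matrix [[0, -I_n],[I_n, 0]] (so J² = -I). For every g in the real symplectic group Sp(2n,ℝ) = {g : gᵀ J g = J}, the matrix C_g := (1/2)(g − J·g·J) commutes with J and is invertible. -/
/-!
`C_g` commutes with `J` because `J² = -1`. With `D_g = (1/2)(g + J g J)`, expanding and using
`Jᵀ = -J` and `gᵀ J g = J` gives `C_gᵀ C_g = 1 + D_gᵀ D_g`, which is positive definite;
hence `det C_g ≠ 0`.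
-/

open Matrix

namespace Matrix

section ComplexPart

variable {m R : Type*} [Fintype m] [DecidableEq m] [CommRing R] {J : Matrix m m R}

theorem sub_conj_mul_comm (hJJ : J * J = -1) (g : Matrix m m R) :
    (g - J * g * J) * J = J * (g - J * g * J) := by
  have hr : (g - J * g * J) * J = g * J + J * g := by
    rw [sub_mul, mul_assoc (J * g), hJJ]
    noncomm_ring
  have hl : J * (g - J * g * J) = J * g + g * J := by
    rw [mul_sub, ← mul_assoc, ← mul_assoc, hJJ]
    noncomm_ring
  rw [hr, hl, add_comm]

theorem transpose_sub_conj_mul_self {g : Matrix m m R} (hJJ : J * J = -1) (hJT : Jᵀ = -J)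
    (hg : gᵀ * J * g = J) :
    (g - J * g * J)ᵀ * (g - J * g * J) = (4 : R) • 1 + (g + J * g * J)ᵀ * (g + J * g * J) := by
  have hexp : (g - J * g * J)ᵀ * (g - J * g * J) - (g + J * g * J)ᵀ * (g + J * g * J)
      = -((gᵀ * J * g) * J) - (gᵀ * J * g) * J - J * (gᵀ * J * g) - J * (gᵀ * J * g) := by
    simp only [transpose_sub, transpose_add, transpose_mul, hJT]
    noncomm_ring
  rw [hg, hJJ] at hexp
  refine eq_add_of_sub_eq ?_
  rw [hexp]
  module

end ComplexPart

open scoped ComplexOrder in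
theorem isUnit_of_conjTranspose_mul_self_eq_one_add {m 𝕜 : Type*} [Fintype m] [DecidableEq m]
    [RCLike 𝕜] {A B : Matrix m m 𝕜} (h : Aᴴ * A = 1 + Bᴴ * B) : IsUnit A := by
  have hpos : (Aᴴ * A).PosDef := h ▸ PosDef.one.add_posSemidef (posSemidef_conjTranspose_mul_self B)
  have hdet : det Aᴴ * det A ≠ 0 := by
    rw [← det_mul]
    exact hpos.det_pos.ne'
  exact (isUnit_iff_isUnit_det A).mpr (right_ne_zero_of_mul hdet).isUnit

end Matrix

theorem symplectic_Cg_commutes_and_invertible_general (n : ℕ)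
    (g : Matrix (Fin n ⊕ Fin n) (Fin n ⊕ Fin n) ℝ)
    (hg : gᵀ * Matrix.J (Fin n) ℝ * g = Matrix.J (Fin n) ℝ) :
    ((1 / 2 : ℝ) • (g - Matrix.J (Fin n) ℝ * g * Matrix.J (Fin n) ℝ)) * Matrix.J (Fin n) ℝ
        = Matrix.J (Fin n) ℝ *
          ((1 / 2 : ℝ) • (g - Matrix.J (Fin n) ℝ * g * Matrix.J (Fin n) ℝ)) ∧
      IsUnit ((1 / 2 : ℝ) • (g - Matrix.J (Fin n) ℝ * g * Matrix.J (Fin n) ℝ)) := by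
  set J := Matrix.J (Fin n) ℝ
  have hJJ : J * J = -1 := J_squared _ _
  refine ⟨by rw [smul_mul_assoc, mul_smul_comm, sub_conj_mul_comm hJJ], ?_⟩
  set D := (1 / 2 : ℝ) • (g + J * g * J)
  apply isUnit_of_conjTranspose_mul_self_eq_one_add (B := D)
  simp only [conjTranspose_eq_transpose_of_trivial, D, transpose_smul, smul_mul_smul_comm,
    transpose_sub_conj_mul_self hJJ (J_transpose _ _) hg]
  module

/-- For `g` in the real symplectic group `Sp(2n,ℝ)` (i.e. `gᵀ J g = J` where
`J = [[0,-I],[I,0]]`), the matrix `C_g = (1/2)(g - J g J)` commutes with `J`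
and is invertible. -/
theorem symplectic_Cg_commutes_and_invertible (n : ℕ) (hn : 1 ≤ n)
    (g : Matrix (Fin n ⊕ Fin n) (Fin n ⊕ Fin n) ℝ)
    (hg : gᵀ * Matrix.J (Fin n) ℝ * g = Matrix.J (Fin n) ℝ) :
    ((1 / 2 : ℝ) • (g - Matrix.J (Fin n) ℝ * g * Matrix.J (Fin n) ℝ)) * Matrix.J (Fin n) ℝ
        = Matrix.J (Fin n) ℝ *
          ((1 / 2 : ℝ) • (g - Matrix.J (Fin n) ℝ * g * Matrix.J (Fin n) ℝ)) ∧
      IsUnit ((1 / 2 : ℝ) • (g - Matrix.J (Fin n) ℝ * g * Matrix.J (Fin n) ℝ)) :=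
  symplectic_Cg_commutes_and_invertible_general n g hg
end

section
/- Let n ≥ 1 and let J be the 2n×2n real block matrix [[0, -I_n],[I_n, 0]]. Every compact subgroup G of the real symplectic group Sp(2n,ℝ) = {g : gᵀ J g = J} (with its topology as a matrix group) is conjugate within Sp(2n,ℝ) to a subgroup of the unitary group Sp(2n,ℝ) ∩ O(2n): there exists S ∈ Sp(2n,ℝ) such that S·g·S⁻¹ is orthogonal for every g ∈ G. -/
/-!
Averaging `g gᵀ` over the Haar measure of `G` gives a positive definite `P` with `g P gᵀ = P`.
The equation `X P X = J P Jᵀ` has a unique positive definite solution `X` (a matrix geometric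
mean). Every `g ∈ G` preserves both `P` and `J`, so `gᵀ X g` solves the same equation, and so does
`J X⁻¹ Jᵀ`; by uniqueness `X` is `G`-invariant and symplectic. Its positive square root `S` is again
symplectic by uniqueness of positive square roots, and `S g S⁻¹` is orthogonal since
`gᵀ S² g = S²`.
-/

open Matrix MeasureTheory
open scoped MatrixOrder ComplexOrder

section HaarAverage

-- Any norm on matrices gives the same Bochner integral.
attribute [local instance] Matrix.normedAddCommGroup Matrix.normedSpace

variable {ι K : Type*} [Fintype ι] [DecidableEq ι] [Group K] [TopologicalSpace K] [CompactSpace K]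
  [MeasurableSpace K] [OpensMeasurableSpace K] (μ : Measure K) [IsFiniteMeasure μ]
  {ρ : K →* Matrix ι ι ℝ}

lemma integral_comp_mul_transpose_self (hρ : Continuous ρ)
    {E : Type*} [NormedAddCommGroup E] [NormedSpace ℝ E] [CompleteSpace E]
    (L : Matrix ι ι ℝ →ₗ[ℝ] E) :
    ∫ k, L (ρ k * (ρ k)ᵀ) ∂μ = L (∫ k, ρ k * (ρ k)ᵀ ∂μ) :=
  (LinearMap.toContinuousLinearMap L).integral_comp_comm <|
    (hρ.mul hρ.matrix_transpose).integrable_of_hasCompactSupport (.of_compactSpace _)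

lemma posDef_integral_mul_transpose_self [μ.IsOpenPosMeasure] (hρ : Continuous ρ) :
    (∫ k, ρ k * (ρ k)ᵀ ∂μ).PosDef := by
  refine posDef_iff_dotProduct_mulVec.mpr ⟨?_, fun x hx => ?_⟩
  · have := integral_comp_mul_transpose_self μ hρ (transposeLinearEquiv ι ι ℝ ℝ).toLinearMap
    simpa [transpose_mul, IsHermitian] using this.symm
  · let q : Matrix ι ι ℝ →ₗ[ℝ] ℝ :=
      { toFun := fun M => x ⬝ᵥ M *ᵥ x
        map_add' := by simp [add_mulVec, dotProduct_add]
        map_smul' := by simp [smul_mulVec, dotProduct_smul] }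
    have hq (k : K) : q (ρ k * (ρ k)ᵀ) = (ρ k)ᵀ *ᵥ x ⬝ᵥ (ρ k)ᵀ *ᵥ x := by
      change x ⬝ᵥ (ρ k * (ρ k)ᵀ) *ᵥ x = _
      rw [← mulVec_mulVec, dotProduct_mulVec, ← mulVec_transpose]
    have hquad := integral_comp_mul_transpose_self μ hρ q
    simp only [hq] at hquad
    rw [star_trivial]
    change 0 < q _
    rw [← hquad]
    refine Continuous.integral_pos_of_hasCompactSupport_nonneg_nonzero (x := 1) (by fun_prop)
      (.of_compactSpace _) (fun k => dotProduct_self_star_nonneg _) ?_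
    simpa using hx

lemma mul_integral_mul_transpose_self_mul [MeasurableMul K] [μ.IsMulLeftInvariant]
    (hρ : Continuous ρ) (g : K) :
    ρ g * (∫ k, ρ k * (ρ k)ᵀ ∂μ) * (ρ g)ᵀ = ∫ k, ρ k * (ρ k)ᵀ ∂μ := by
  have := integral_comp_mul_transpose_self μ hρ
    ((LinearMap.mulLeft ℝ (ρ g)).comp (LinearMap.mulRight ℝ (ρ g)ᵀ))
  simp only [LinearMap.comp_apply, LinearMap.mulLeft_apply, LinearMap.mulRight_apply] at this
  rw [← mul_assoc] at this
  rw [← this]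
  simp_rw [← mul_assoc, ← map_mul, mul_assoc, ← transpose_mul, ← map_mul]
  exact integral_mul_left_eq_self (fun k => ρ k * (ρ k)ᵀ) g

end HaarAverage

theorem exists_posDef_mul_mul_transpose_eq {ι K : Type*} [Fintype ι] [DecidableEq ι] [Group K]
    [TopologicalSpace K] [IsTopologicalGroup K] [CompactSpace K] {ρ : K →* Matrix ι ι ℝ}
    (hρ : Continuous ρ) :
    ∃ P : Matrix ι ι ℝ, P.PosDef ∧ ∀ g, ρ g * P * (ρ g)ᵀ = P := by
  borelize K
  let μ := Measure.haarMeasure (⊤ : TopologicalSpace.PositiveCompacts K)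
  exact ⟨_, posDef_integral_mul_transpose_self μ hρ, mul_integral_mul_transpose_self_mul μ hρ⟩

namespace Matrix

section PosDef

variable {𝕜 ι : Type*} [RCLike 𝕜] [Fintype ι] [DecidableEq ι]

lemma PosDef.sqrt {A : Matrix ι ι 𝕜} (hA : A.PosDef) : (CFC.sqrt A).PosDef :=
  isStrictlyPositive_iff_posDef.mp (isStrictlyPositive_iff_posDef.mpr hA).sqrt

lemma PosDef.mul_mul_of_posDef {A R : Matrix ι ι 𝕜} (hA : A.PosDef) (hR : R.PosDef) :
    (R * A * R).PosDef := by
  have := (IsUnit.posDef_star_left_conjugate_iff hR.isUnit).mpr hA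
  rwa [star_eq_conjTranspose, hR.isHermitian.eq] at this

lemma PosDef.eq_of_mul_mul_self_eq {A X Y : Matrix ι ι 𝕜} (hA : A.PosDef) (hX : X.PosDef)
    (hY : Y.PosDef) (h : X * A * X = Y * A * Y) : X = Y := by
  set R := CFC.sqrt A
  have hRR : R * R = A := CFC.sqrt_mul_sqrt_self A hA.posSemidef.nonneg
  have hsq : (R * X * R) * (R * X * R) = (R * Y * R) * (R * Y * R) := by
    calc (R * X * R) * (R * X * R) = R * (X * (R * R) * X) * R := by noncomm_ring
      _ = (R * Y * R) * (R * Y * R) := by rw [hRR, h, ← hRR]; noncomm_ring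
  have hRXR := (CFC.mul_self_eq_mul_self_iff _ _ (hX.mul_mul_of_posDef hA.sqrt).posSemidef.nonneg
    (hY.mul_mul_of_posDef hA.sqrt).posSemidef.nonneg).mp hsq
  have hR := hA.sqrt.isUnit
  exact hR.mul_left_cancel (hR.mul_right_cancel hRXR)

lemma PosDef.exists_mul_mul_self_eq {A B : Matrix ι ι 𝕜} (hA : A.PosDef) (hB : B.PosDef) :
    ∃ X : Matrix ι ι 𝕜, X.PosDef ∧ X * A * X = B := by
  set R := CFC.sqrt A
  have hRR : R * R = A := CFC.sqrt_mul_sqrt_self A hA.posSemidef.nonneg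
  have hR : R.PosDef := hA.sqrt
  set M := R * B * R
  have hM : M.PosDef := hB.mul_mul_of_posDef hR
  refine ⟨R⁻¹ * CFC.sqrt M * R⁻¹, hM.sqrt.mul_mul_of_posDef hR.inv, ?_⟩
  have hMM : CFC.sqrt M * CFC.sqrt M = M := CFC.sqrt_mul_sqrt_self M hM.posSemidef.nonneg
  have hRu := (isUnit_iff_isUnit_det R).mp hR.isUnit
  have hR₁ : R⁻¹ * R = 1 := nonsing_inv_mul R hRu
  have hR₂ : R * R⁻¹ = 1 := mul_nonsing_inv R hRu
  calc R⁻¹ * CFC.sqrt M * R⁻¹ * A * (R⁻¹ * CFC.sqrt M * R⁻¹)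
      = R⁻¹ * CFC.sqrt M * (R⁻¹ * R) * (R * R⁻¹) * CFC.sqrt M * R⁻¹ := by
        rw [← hRR]; noncomm_ring
    _ = R⁻¹ * (CFC.sqrt M * CFC.sqrt M) * R⁻¹ := by rw [hR₁, hR₂]; noncomm_ring
    _ = (R⁻¹ * R) * B * (R * R⁻¹) := by rw [hMM]; simp only [M, mul_assoc]
    _ = B := by rw [hR₁, hR₂]; noncomm_ring

end PosDef

lemma PosDef.transpose_eq_self {ι : Type*} [Fintype ι] {X : Matrix ι ι ℝ} (hX : X.PosDef) :
    Xᵀ = X :=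
  (isHermitian_iff_isSymm.mp hX.isHermitian).eq

lemma transpose_mul_self_conj_eq_one {ι R : Type*} [Fintype ι] [DecidableEq ι] [CommRing R]
    {S g : Matrix ι ι R} (hS : IsUnit S.det) (hg : gᵀ * (Sᵀ * S) * g = Sᵀ * S) :
    (S * g * S⁻¹)ᵀ * (S * g * S⁻¹) = 1 :=
  calc (S * g * S⁻¹)ᵀ * (S * g * S⁻¹) = (S⁻¹)ᵀ * (gᵀ * (Sᵀ * S) * g) * S⁻¹ := by
        simp only [transpose_mul, mul_assoc]
    _ = (S * S⁻¹)ᵀ * (S * S⁻¹) := by rw [hg, transpose_mul]; simp only [mul_assoc]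
    _ = 1 := by rw [mul_nonsing_inv S hS, transpose_one, one_mul]

variable {l R : Type*} [Fintype l] [DecidableEq l] [CommRing R]

lemma J_transpose_mul_J : (J l R)ᵀ * J l R = 1 := by
  rw [J_transpose, neg_mul, J_squared, neg_neg]

lemma J_mul_J_transpose : J l R * (J l R)ᵀ = 1 := by
  rw [J_transpose, mul_neg, J_squared, neg_neg]

lemma PosDef.J_mul_mul_J_transpose {X : Matrix (l ⊕ l) (l ⊕ l) ℝ} (hX : X.PosDef) :
    (J l ℝ * X * (J l ℝ)ᵀ).PosDef := by
  have hJ : IsUnit (J l ℝ) := (isUnit_iff_isUnit_det _).mpr (isUnit_det_J l ℝ)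
  have := (IsUnit.posDef_star_right_conjugate_iff hJ).mpr hX
  rwa [star_eq_conjTranspose, conjTranspose_eq_transpose_of_trivial] at this

end Matrix

namespace SymplecticGroup

variable {l R : Type*} [Fintype l] [DecidableEq l] [CommRing R]

lemma isClosed [TopologicalSpace R] [IsTopologicalRing R] [T2Space R] :
    IsClosed (symplecticGroup l R : Set (Matrix (l ⊕ l) (l ⊕ l) R)) :=
  isClosed_eq (by fun_prop) continuous_const

instance [TopologicalSpace R] [IsTopologicalRing R] : IsTopologicalGroup (symplecticGroup l R) where
  continuous_mul := by fun_prop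
  continuous_inv :=
    Continuous.subtype_mk
      (f := fun A : symplecticGroup l R => -J l R * (A : Matrix _ _ R)ᵀ * J l R) (by fun_prop) _

lemma transpose_mul_J {g : Matrix (l ⊕ l) (l ⊕ l) R} (hg : g ∈ symplecticGroup l R) :
    gᵀ * J l R = J l R * g⁻¹ := by
  rw [inv_eq_symplectic_inv g hg, ← mul_assoc, ← mul_assoc, mul_neg, J_squared]
  noncomm_ring

lemma mem_iff_eq_J_mul_inv_mul {X : Matrix (l ⊕ l) (l ⊕ l) R} (hX : Xᵀ = X)
    (hXu : IsUnit X.det) : X ∈ symplecticGroup l R ↔ X = J l R * X⁻¹ * (J l R)ᵀ := by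
  rw [mem_iff, hX]
  constructor
  · intro h
    calc X = X * (J l R * (J l R)ᵀ) := by rw [J_mul_J_transpose, mul_one]
      _ = X * J l R * X * X⁻¹ * (J l R)ᵀ := by
        rw [mul_assoc _ X, mul_nonsing_inv X hXu]; noncomm_ring
      _ = _ := by rw [h]
  · intro h
    nth_rewrite 1 [h]
    rw [mul_assoc _ (J l R)ᵀ, J_transpose_mul_J, mul_one, mul_assoc, nonsing_inv_mul X hXu,
      mul_one]

lemma sqrt_mem {X : Matrix (l ⊕ l) (l ⊕ l) ℝ} (hX : X.PosDef) (hXsp : X ∈ symplecticGroup l ℝ) :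
    CFC.sqrt X ∈ symplecticGroup l ℝ := by
  set S := CFC.sqrt X
  have hS : S.PosDef := hX.sqrt
  have hSS : S * S = X := CFC.sqrt_mul_sqrt_self X hX.posSemidef.nonneg
  have hT := hS.inv.J_mul_mul_J_transpose
  refine (mem_iff_eq_J_mul_inv_mul hS.transpose_eq_self
    ((isUnit_iff_isUnit_det _).mp hS.isUnit)).mpr
    ((CFC.mul_self_eq_mul_self_iff _ _ hS.posSemidef.nonneg hT.posSemidef.nonneg).mp ?_)
  calc S * S = J l ℝ * X⁻¹ * (J l ℝ)ᵀ := by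
        rw [hSS]
        exact (mem_iff_eq_J_mul_inv_mul hX.transpose_eq_self
          ((isUnit_iff_isUnit_det X).mp hX.isUnit)).mp hXsp
    _ = J l ℝ * S⁻¹ * ((J l ℝ)ᵀ * J l ℝ) * S⁻¹ * (J l ℝ)ᵀ := by
        rw [J_transpose_mul_J, ← hSS, Matrix.mul_inv_rev]; noncomm_ring
    _ = _ := by noncomm_ring

section GeometricMean

variable {P X : Matrix (l ⊕ l) (l ⊕ l) ℝ}

lemma mem_of_mul_mul_self_eq (hP : P.PosDef) (hX : X.PosDef)
    (h : X * P * X = J l ℝ * P * (J l ℝ)ᵀ) : X ∈ symplecticGroup l ℝ := by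
  have hXu := (isUnit_iff_isUnit_det X).mp hX.isUnit
  refine (mem_iff_eq_J_mul_inv_mul hX.transpose_eq_self hXu).mpr
    (hP.eq_of_mul_mul_self_eq hX hX.inv.J_mul_mul_J_transpose ?_)
  have hJPJ : (J l ℝ)ᵀ * P * J l ℝ = X * P * X := by rw [h, J_transpose]; noncomm_ring
  calc X * P * X = J l ℝ * (X⁻¹ * X) * P * (X * X⁻¹) * (J l ℝ)ᵀ := by
        rw [nonsing_inv_mul X hXu, mul_nonsing_inv X hXu, h]; noncomm_ring
    _ = J l ℝ * X⁻¹ * ((J l ℝ)ᵀ * P * J l ℝ) * X⁻¹ * (J l ℝ)ᵀ := by rw [hJPJ]; noncomm_ring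
    _ = _ := by noncomm_ring

lemma transpose_mul_mul_eq_of_mul_mul_self_eq (hP : P.PosDef) (hX : X.PosDef)
    (h : X * P * X = J l ℝ * P * (J l ℝ)ᵀ) {g : Matrix (l ⊕ l) (l ⊕ l) ℝ} (hg : g ∈ symplecticGroup l ℝ) (hgP : g * P * gᵀ = P) : gᵀ * X * g = X := by
  have hgu := symplectic_det hg
  have hY : (gᵀ * X * g).PosDef := by
    have := (IsUnit.posDef_star_left_conjugate_iff ((isUnit_iff_isUnit_det g).mpr hgu)).mpr hX
    rwa [star_eq_conjTranspose, conjTranspose_eq_transpose_of_trivial] at this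
  have hginvP : g⁻¹ * P * (g⁻¹)ᵀ = P :=
    calc g⁻¹ * P * (g⁻¹)ᵀ = (g⁻¹ * g) * P * (g⁻¹ * g)ᵀ := by
          nth_rewrite 1 [← hgP]; rw [transpose_mul]; noncomm_ring
      _ = P := by rw [nonsing_inv_mul g hgu, transpose_one, one_mul, mul_one]
  refine hP.eq_of_mul_mul_self_eq hY hX ?_
  calc gᵀ * X * g * P * (gᵀ * X * g) = gᵀ * (X * (g * P * gᵀ) * X) * g := by noncomm_ring
    _ = gᵀ * J l ℝ * P * (gᵀ * J l ℝ)ᵀ := by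
        rw [hgP, h]; simp only [transpose_mul, transpose_transpose, mul_assoc]
    _ = J l ℝ * (g⁻¹ * P * (g⁻¹)ᵀ) * (J l ℝ)ᵀ := by
        rw [transpose_mul_J hg]; simp only [transpose_mul, mul_assoc]
    _ = X * P * X := by rw [hginvP, h]

end GeometricMean

theorem exists_posDef_mem_forall_transpose_mul_mul_eq {P : Matrix (l ⊕ l) (l ⊕ l) ℝ}
    (hP : P.PosDef) :
    ∃ X : Matrix (l ⊕ l) (l ⊕ l) ℝ, X.PosDef ∧ X ∈ symplecticGroup l ℝ ∧
      ∀ g ∈ symplecticGroup l ℝ, g * P * gᵀ = P → gᵀ * X * g = X := by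
  obtain ⟨X, hX, h⟩ := hP.exists_mul_mul_self_eq hP.J_mul_mul_J_transpose
  exact ⟨X, hX, mem_of_mul_mul_self_eq hP hX h,
    fun g hg hgP => transpose_mul_mul_eq_of_mul_mul_self_eq hP hX h hg hgP⟩

end SymplecticGroup

theorem compact_subgroup_of_symplectic_conjugate_to_unitary_general (n : ℕ)
    (G : Set (Matrix (Fin n ⊕ Fin n) (Fin n ⊕ Fin n) ℝ))
    (hsp : ∀ g ∈ G, gᵀ * Matrix.J (Fin n) ℝ * g = Matrix.J (Fin n) ℝ)
    (hcpt : IsCompact G)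
    (hone : (1 : Matrix (Fin n ⊕ Fin n) (Fin n ⊕ Fin n) ℝ) ∈ G)
    (hmul : ∀ g ∈ G, ∀ g' ∈ G, g * g' ∈ G)
    (hinv : ∀ g ∈ G, g⁻¹ ∈ G) :
    ∃ S : Matrix (Fin n ⊕ Fin n) (Fin n ⊕ Fin n) ℝ,
      Sᵀ * Matrix.J (Fin n) ℝ * S = Matrix.J (Fin n) ℝ ∧
      ∀ g ∈ G, (S * g * S⁻¹)ᵀ * (S * g * S⁻¹) = 1 := by
  have hGsp (g) (hg : g ∈ G) : g ∈ symplecticGroup (Fin n) ℝ :=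
    SymplecticGroup.mem_iff'.mpr (hsp g hg)
  let H : Subgroup (symplecticGroup (Fin n) ℝ) :=
    { carrier := Subtype.val ⁻¹' G
      one_mem' := hone
      mul_mem' := fun ha hb => hmul _ ha _ hb
      inv_mem' := fun {A} hA => by simpa [SymplecticGroup.coe_inv'] using hinv _ hA }
  have : CompactSpace H := isCompact_iff_compactSpace.mp <|
    SymplecticGroup.isClosed.isClosedEmbedding_subtypeVal.isCompact_preimage hcpt
  obtain ⟨P, hP, hPG⟩ := exists_posDef_mul_mul_transpose_eq
    (ρ := (symplecticGroup (Fin n) ℝ).subtype.comp H.subtype)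
    (continuous_subtype_val.comp continuous_subtype_val)
  obtain ⟨X, hX, hXsp, hXG⟩ := SymplecticGroup.exists_posDef_mem_forall_transpose_mul_mul_eq hP
  refine ⟨CFC.sqrt X, SymplecticGroup.mem_iff'.mp (SymplecticGroup.sqrt_mem hX hXsp),
    fun g hg => transpose_mul_self_conj_eq_one ((isUnit_iff_isUnit_det _).mp hX.sqrt.isUnit) ?_⟩
  rw [hX.sqrt.transpose_eq_self, CFC.sqrt_mul_sqrt_self X hX.posSemidef.nonneg]
  exact hXG g (hGsp g hg) (hPG ⟨⟨g, hGsp g hg⟩, hg⟩)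

/-- Every compact subgroup `G` of the real symplectic group
`Sp(2n,ℝ) = {g : gᵀ J g = J}` is conjugate within `Sp(2n,ℝ)` to a subgroup of
the unitary group `Sp(2n,ℝ) ∩ O(2n)`: there is a symplectic matrix `S` with
`S g S⁻¹` orthogonal for every `g ∈ G`. -/
theorem compact_subgroup_of_symplectic_conjugate_to_unitary (n : ℕ) (hn : 1 ≤ n)
    (G : Set (Matrix (Fin n ⊕ Fin n) (Fin n ⊕ Fin n) ℝ))
    (hsp : ∀ g ∈ G, gᵀ * Matrix.J (Fin n) ℝ * g = Matrix.J (Fin n) ℝ)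
    (hcpt : IsCompact G)
    (hone : (1 : Matrix (Fin n ⊕ Fin n) (Fin n ⊕ Fin n) ℝ) ∈ G)
    (hmul : ∀ g ∈ G, ∀ g' ∈ G, g * g' ∈ G)
    (hinv : ∀ g ∈ G, g⁻¹ ∈ G) :
    ∃ S : Matrix (Fin n ⊕ Fin n) (Fin n ⊕ Fin n) ℝ,
      Sᵀ * Matrix.J (Fin n) ℝ * S = Matrix.J (Fin n) ℝ ∧
      ∀ g ∈ G, (S * g * S⁻¹)ᵀ * (S * g * S⁻¹) = 1 :=
  compact_subgroup_of_symplectic_conjugate_to_unitary_general n G hsp hcpt hone hmul hinv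
end

section
/- Let n ≥ 1 and h > 0, and define Φ' : ℂⁿ → ℝ by Φ'(z) = −π‖z‖² + hn/2. Then the set of x ∈ ℝ such that x ∈ hℤ, the level set Φ'⁻¹(x) is nonempty, and the Fréchet derivative of Φ' is nonzero at every point of Φ'⁻¹(x), is exactly {−hN : N ∈ ℤ, 2N > −n}. -/
/-!
`Φ'` is `a‖z‖² + c` with `a = -π < 0` and `c = hn/2`. Its differential at `z` is `2a⟪z, ·⟫`,
which vanishes only at `z = 0`, so the only critical value is `c`; and since `ℂⁿ ≠ 0` the image
of `Φ'` is `(-∞, c]`. Hence the nonempty regular values form `(-∞, c)`, and a lattice point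
`hm` lies there iff `2m < n`.
-/

open Real

/-- The shifted momentum map for the diagonal circle action on `ℂⁿ`:
`Φ'(z) = −π‖z‖² + hn/2`. -/
noncomputable def PhiShifted (n : ℕ) (h : ℝ) (z : EuclideanSpace ℂ (Fin n)) : ℝ :=
  -π * ‖z‖ ^ 2 + h * n / 2

section

variable {F : Type*} [NormedAddCommGroup F] [InnerProductSpace ℝ F]

theorem fderiv_mul_norm_sq_add_const_eq_zero_iff {a : ℝ} (ha : a ≠ 0) (c : ℝ) (z : F) :
    fderiv ℝ (fun w : F ↦ a * ‖w‖ ^ 2 + c) z = 0 ↔ z = 0 := by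
  have hderiv : fderiv ℝ (fun w : F ↦ a * ‖w‖ ^ 2 + c) z = a • (2 : ℕ) • innerSL ℝ z :=
    (((hasStrictFDerivAt_norm_sq z).hasFDerivAt.const_mul a).add_const c).fderiv
  refine ⟨fun h0 ↦ ?_, fun hz ↦ by rw [hderiv, hz]; simp⟩
  have hz : a * (2 * ‖z‖ ^ 2) = 0 := by
    simpa [hderiv, real_inner_self_eq_norm_sq] using congrArg (fun L ↦ L z) h0
  simpa [ha] using hz

theorem forall_preimage_mul_norm_sq_add_const_fderiv_ne_zero_iff {a : ℝ} (ha : a ≠ 0)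
    (c x : ℝ) :
    (∀ z ∈ (fun w : F ↦ a * ‖w‖ ^ 2 + c) ⁻¹' {x},
      fderiv ℝ (fun w : F ↦ a * ‖w‖ ^ 2 + c) z ≠ 0) ↔ x ≠ c := by
  constructor
  · rintro hregular rfl
    exact hregular 0 (by simp) ((fderiv_mul_norm_sq_add_const_eq_zero_iff ha x 0).2 rfl)
  · rintro hx z hz hcrit
    obtain rfl := (fderiv_mul_norm_sq_add_const_eq_zero_iff ha c z).1 hcrit
    exact hx (by simpa [eq_comm] using hz)

end

section

variable {F : Type*} [NormedAddCommGroup F] [NormedSpace ℝ F] [Nontrivial F]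

theorem preimage_mul_norm_sq_add_const_nonempty_iff {a : ℝ} (ha : a < 0) (c x : ℝ) :
    ((fun w : F ↦ a * ‖w‖ ^ 2 + c) ⁻¹' {x}).Nonempty ↔ x ≤ c := by
  constructor
  · rintro ⟨z, rfl⟩
    nlinarith [sq_nonneg ‖z‖]
  · intro hx
    obtain ⟨z, hz⟩ := exists_norm_eq F (Real.sqrt_nonneg ((x - c) / a))
    have hz_sq : ‖z‖ ^ 2 = (x - c) / a := by
      rw [hz, Real.sq_sqrt (div_nonneg_of_nonpos (by linarith) ha.le)]
    refine ⟨z, ?_⟩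
    simp only [Set.mem_preimage, Set.mem_singleton_iff, hz_sq, mul_div_cancel₀ _ ha.ne]
    ring

end

theorem exists_int_mul_and_lt_half_iff {h : ℝ} (hh : 0 < h) (n : ℤ) (x : ℝ) :
    ((∃ m : ℤ, x = h * m) ∧ x < h * n / 2) ↔ ∃ N : ℤ, x = -(h * N) ∧ 2 * N > -n := by
  constructor
  · rintro ⟨⟨m, rfl⟩, hx⟩
    refine ⟨-m, by push_cast; ring, ?_⟩
    have : 2 * m < n := by exact_mod_cast (by nlinarith : (2 * m : ℝ) < n)
    omega
  · rintro ⟨N, rfl, hN⟩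
    refine ⟨⟨-N, by push_cast; ring⟩, ?_⟩
    have : (-n : ℝ) < 2 * N := by exact_mod_cast hN
    nlinarith

/-- The quantized energy levels of the equivariant metaplectic-c prequantized
system on `ℂⁿ`, i.e. the nonempty regular values of `Φ'(z) = −π‖z‖² + hn/2`
lying in the lattice `hℤ`, are exactly the values `−hN` with `N ∈ ℤ`, `2N > −n`. -/
theorem quantized_levels_of_shifted_momentum_map (n : ℕ) (hn : 1 ≤ n)
    (h : ℝ) (hh : 0 < h) :
    {x : ℝ | (∃ m : ℤ, x = h * m) ∧ (PhiShifted n h ⁻¹' {x}).Nonempty ∧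
        ∀ z ∈ PhiShifted n h ⁻¹' {x}, fderiv ℝ (PhiShifted n h) z ≠ 0}
      = {x : ℝ | ∃ N : ℤ, x = -(h * N) ∧ 2 * N > -(n : ℤ)} := by
  -- `ℂⁿ` is not a real inner product space by instance (there is a diamond with `PiLp`).
  let _ : InnerProductSpace ℝ (EuclideanSpace ℂ (Fin n)) := InnerProductSpace.complexToReal
  have : Nonempty (Fin n) := ⟨⟨0, hn⟩⟩
  have hΦ : PhiShifted n h = fun w ↦ -π * ‖w‖ ^ 2 + h * n / 2 := rfl
  ext x
  have hnonempty := preimage_mul_norm_sq_add_const_nonempty_iff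
    (F := EuclideanSpace ℂ (Fin n)) (neg_lt_zero.2 pi_pos) (h * n / 2) x
  have hregular := forall_preimage_mul_norm_sq_add_const_fderiv_ne_zero_iff
    (F := EuclideanSpace ℂ (Fin n)) (neg_ne_zero.2 pi_ne_zero) (h * n / 2) x
  have hlattice := exists_int_mul_and_lt_half_iff hh n x
  rw [Int.cast_natCast] at hlattice
  rw [Set.mem_ofPred_eq, Set.mem_ofPred_eq, ← hlattice, lt_iff_le_and_ne, ← hnonempty,
    ← hregular, hΦ]
end
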